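/- arXiv:1004.0614 — 2 statements merged into one kernel-verified Lean document; each statement's English description precedes it below -/
import Mathlib

section
/- The l-fold amplification of the transpose map on M_k(ℂ) has norm at most l: for every x ∈ M_l(M_k(ℂ)), ‖(id_{M_l} ⊗ t_k)(x)‖ ≤ l · ‖x‖, where (id_{M_l} ⊗ t_k) applies the transpose in each k×k block. -/
open Matrix
open scoped Matrix.Norms.L2Operator

/-- The `l`-fold amplification of the transpose map on `M_k(ℂ)` has norm at most `l`:
identifying `M_l(M_k(ℂ))` with matrices indexed by `Fin l × Fin k`, the map transposing
each `k×k` block increases the operator norm by a factor of at most `l`. -/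
theorem stmt_6 (l k : ℕ) (x : Matrix (Fin l × Fin k) (Fin l × Fin k) ℂ) :
    ‖Matrix.of (fun p q : Fin l × Fin k => x (p.1, q.2) (q.1, p.2))‖ ≤ l * ‖x‖ := by
  classical
  set y : Matrix (Fin l × Fin k) (Fin l × Fin k) ℂ :=
    Matrix.of (fun p q : Fin l × Fin k => x (p.1, q.2) (q.1, p.2)) with hy
  have hx : (0:ℝ) ≤ ‖x‖ := norm_nonneg x
  rw [Matrix.l2_opNorm_def]
  refine ContinuousLinearMap.opNorm_le_bound _ (by positivity) fun v => ?_
  set vj : Fin l → EuclideanSpace ℂ (Fin k) := fun j =>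
    (WithLp.equiv 2 (Fin k → ℂ)).symm (fun b => v (j, b)) with hvj
  set S : ℝ := ∑ j, ‖vj j‖ with hS
  have hSnn : 0 ≤ S := Finset.sum_nonneg fun j _ => norm_nonneg _
  set T : Fin l → Fin l → EuclideanSpace ℂ (Fin k) := fun i j =>
    (WithLp.equiv 2 (Fin k → ℂ)).symm (fun a => ∑ b, x ((i, b)) ((j, a)) * v (j, b)) with hT
  -- key estimate: ‖T i j‖ ≤ ‖x‖ * ‖vj j‖
  have hTle : ∀ i j, ‖T i j‖ ≤ ‖x‖ * ‖vj j‖ := by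
    intro i j
    set u : EuclideanSpace ℂ (Fin l × Fin k) :=
      (WithLp.equiv 2 (Fin l × Fin k → ℂ)).symm
        (fun r => if r.1 = i then star (v (j, r.2)) else 0) with hu
    have hunorm : ‖u‖ = ‖vj j‖ := by
      rw [EuclideanSpace.norm_eq, EuclideanSpace.norm_eq]
      congr 1
      rw [Fintype.sum_prod_type]
      rw [Fintype.sum_eq_single i]
      · simp [hu, hvj]
      · intro i' hi'
        simp [hu, hi']
    have hmv := Matrix.l2_opNorm_mulVec xᴴ u
    rw [Matrix.l2_opNorm_conjTranspose, hunorm] at hmv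
    refine le_trans ?_ hmv
    rw [EuclideanSpace.norm_eq, EuclideanSpace.norm_eq]
    apply Real.sqrt_le_sqrt
    have hz : ∀ a : Fin k, ‖T i j a‖ = ‖((EuclideanSpace.equiv (Fin l × Fin k) ℂ).symm (xᴴ *ᵥ u)) ((j, a))‖ := by
      intro a
      have : ((EuclideanSpace.equiv (Fin l × Fin k) ℂ).symm (xᴴ *ᵥ u)) ((j, a))
          = star (T i j a) := by
        show (xᴴ *ᵥ (fun r => if r.1 = i then star (v (j, r.2)) else 0)) ((j, a)) = _
        rw [Matrix.mulVec]
        show ∑ r, star (x r ((j,a))) * (if r.1 = i then star (v (j, r.2)) else 0) = _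
        rw [Fintype.sum_prod_type]
        rw [Fintype.sum_eq_single i]
        · show _ = star (∑ b, x ((i, b)) ((j, a)) * v (j, b))
          rw [star_sum]
          simp [mul_comm]
        · intro i' hi'
          simp [hi']
      rw [this, norm_star]
    calc ∑ a, ‖T i j a‖ ^ 2
        = ∑ a, ‖((EuclideanSpace.equiv (Fin l × Fin k) ℂ).symm (xᴴ *ᵥ u)) ((j, a))‖ ^ 2 := by
          simp only [hz]
      _ ≤ ∑ p : Fin l × Fin k, ‖((EuclideanSpace.equiv (Fin l × Fin k) ℂ).symm (xᴴ *ᵥ u)) p‖ ^ 2 := by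
          have hsub := Finset.sum_le_sum_of_subset_of_nonneg
            (s := (Finset.univ.image (fun a : Fin k => ((j, a) : Fin l × Fin k))))
            (t := Finset.univ)
            (f := fun p : Fin l × Fin k => ‖((EuclideanSpace.equiv (Fin l × Fin k) ℂ).symm (xᴴ *ᵥ u)) p‖ ^ 2)
            (Finset.subset_univ _) (fun _ _ _ => by positivity)
          refine le_trans (le_of_eq ?_) hsub
          rw [Finset.sum_image]
          intro a _ a' _ h
          exact (Prod.mk.injEq _ _ _ _ ▸ h).2
      _ = _ := rfl
  -- reduce the goal to a statement about a plain function
  rw [LinearEquiv.trans_apply]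
  have hrepr : (Matrix.toEuclideanLin y).toContinuousLinearMap v
      = (WithLp.equiv 2 (Fin l × Fin k → ℂ)).symm (y *ᵥ (WithLp.equiv 2 (Fin l × Fin k → ℂ)) v) := rfl
  rw [hrepr]
  set wf : Fin l × Fin k → ℂ := y *ᵥ (WithLp.equiv 2 (Fin l × Fin k → ℂ)) v with hwf
  -- row i of wf equals sum of T i j
  have hrow : ∀ i a, wf ((i, a)) = ∑ j, T i j a := by
    intro i a
    show ∑ q, y ((i,a)) q * v q = _
    rw [Fintype.sum_prod_type]
    refine Finset.sum_congr rfl fun j _ => ?_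
    refine Finset.sum_congr rfl fun b _ => ?_
    simp [hy, hT]
  have hsumApply : ∀ (i : Fin l) (a : Fin k),
      ((∑ j, T i j : EuclideanSpace ℂ (Fin k)) : EuclideanSpace ℂ (Fin k)) a = ∑ j, T i j a := by
    intro i a
    have h1 := congrFun (map_sum (WithLp.linearEquiv 2 ℂ (Fin k → ℂ)) (fun j => T i j)
      (Finset.univ : Finset (Fin l))) a
    rw [Finset.sum_apply] at h1
    exact h1
  have hrowle : ∀ i : Fin l, Real.sqrt (∑ a, ‖wf ((i, a))‖ ^ 2) ≤ ‖x‖ * S := by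
    intro i
    have h1 : Real.sqrt (∑ a, ‖wf ((i, a))‖ ^ 2) = ‖(∑ j, T i j : EuclideanSpace ℂ (Fin k))‖ := by
      rw [EuclideanSpace.norm_eq]
      congr 1
      refine Finset.sum_congr rfl fun a _ => ?_
      rw [hrow, hsumApply]
    rw [h1]
    calc ‖(∑ j, T i j : EuclideanSpace ℂ (Fin k))‖ ≤ ∑ j, ‖T i j‖ := norm_sum_le _ _
      _ ≤ ∑ j, ‖x‖ * ‖vj j‖ := Finset.sum_le_sum fun j _ => hTle i j
      _ = ‖x‖ * S := by rw [hS, Finset.mul_sum]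
  -- Cauchy-Schwarz for S
  have hvnorm : ‖v‖ ^ 2 = ∑ j, ‖vj j‖ ^ 2 := by
    rw [EuclideanSpace.norm_eq, Real.sq_sqrt (by positivity)]
    rw [Fintype.sum_prod_type]
    refine Finset.sum_congr rfl fun j _ => ?_
    rw [EuclideanSpace.norm_eq, Real.sq_sqrt (by positivity)]
    rfl
  have hCS : S ^ 2 ≤ l * ‖v‖ ^ 2 := by
    rw [hvnorm, hS]
    have h2 := sq_sum_le_card_mul_sum_sq (s := (Finset.univ : Finset (Fin l)))
      (f := fun j => ‖vj j‖)
    simpa using h2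
  -- conclude
  have hfinal : (∑ p : Fin l × Fin k, ‖wf p‖ ^ 2) ≤ (l * ‖x‖ * ‖v‖) ^ 2 := by
    calc ∑ p : Fin l × Fin k, ‖wf p‖ ^ 2
        = ∑ i, ∑ a, ‖wf ((i, a))‖ ^ 2 := by rw [Fintype.sum_prod_type]
      _ ≤ ∑ _i : Fin l, (‖x‖ * S) ^ 2 := by
          refine Finset.sum_le_sum fun i _ => ?_
          have h2 : (0:ℝ) ≤ ∑ a, ‖wf ((i, a))‖ ^ 2 :=
            Finset.sum_nonneg fun a _ => by positivity
          calc ∑ a, ‖wf ((i, a))‖ ^ 2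
              = Real.sqrt (∑ a, ‖wf ((i, a))‖ ^ 2) ^ 2 := (Real.sq_sqrt h2).symm
            _ ≤ (‖x‖ * S) ^ 2 := by
                have := hrowle i
                exact pow_le_pow_left₀ (Real.sqrt_nonneg _) this 2
      _ = l * (‖x‖ * S) ^ 2 := by rw [Finset.sum_const]; simp [mul_comm]
      _ = ‖x‖ ^ 2 * ((l:ℝ) * S ^ 2) := by ring
      _ ≤ ‖x‖ ^ 2 * ((l:ℝ) * ((l:ℝ) * ‖v‖ ^ 2)) := by
          refine mul_le_mul_of_nonneg_left ?_ (by positivity)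
          exact mul_le_mul_of_nonneg_left hCS (by positivity)
      _ = (l * ‖x‖ * ‖v‖) ^ 2 := by ring
  calc ‖(WithLp.equiv 2 (Fin l × Fin k → ℂ)).symm wf‖
      = Real.sqrt (∑ p : Fin l × Fin k, ‖wf p‖ ^ 2) := by
        rw [EuclideanSpace.norm_eq]
        rfl
    _ ≤ Real.sqrt ((l * ‖x‖ * ‖v‖) ^ 2) := Real.sqrt_le_sqrt hfinal
    _ = l * ‖x‖ * ‖v‖ := Real.sqrt_sq (by positivity)
end

section
/- Every unital contractive homomorphism between C*-algebras is a *-homomorphism: if A, B are unital C*-algebras and π : A → B is a unital algebra homomorphism with ‖π(a)‖ ≤ ‖a‖ for all a, then π(a*) = π(a)* for all a ∈ A. -/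
open Complex NormedSpace
open scoped ENNReal NNReal

/-- If `‖φ (exp (t • b))‖ ≤ 1` for all real `t` and `φ 1 = 1`, then `Re (φ b) = 0`. -/
lemma aux_re_eq_zero {B : Type*} [NormedRing B] [NormedAlgebra ℂ B] [CompleteSpace B]
    (φ : B →L[ℂ] ℂ) (hφ1 : φ 1 = 1) (b : B)
    (h : ∀ t : ℝ, ‖φ (NormedSpace.exp ((t : ℂ) • b))‖ ≤ 1) : (φ b).re = 0 := by
  set G : ℝ → ℂ := fun t => φ (NormedSpace.exp ((t : ℂ) • b)) with hGdef
  have hG0 : G 0 = 1 := by simp [hGdef, hφ1]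
  have h1 : HasDerivAt (fun z : ℂ => NormedSpace.exp (z • b)) b 0 := by
    simpa using hasDerivAt_exp_smul_const (𝕂 := ℂ) b 0
  have h2 : HasDerivAt (fun z : ℂ => φ (NormedSpace.exp (z • b))) (φ b) 0 :=
    φ.hasFDerivAt.comp_hasDerivAt 0 h1
  have h3 : HasDerivAt G (φ b) 0 := by
    have := h2.comp_ofReal (z := 0)
    simpa [hGdef] using this
  have hre : HasDerivAt (fun t => (G t).re) ((φ b).re) 0 :=
    Complex.reCLM.hasFDerivAt.comp_hasDerivAt 0 h3
  have him : HasDerivAt (fun t => (G t).im) ((φ b).im) 0 :=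
    Complex.imCLM.hasFDerivAt.comp_hasDerivAt 0 h3
  have hf' : HasDerivAt (fun t => (G t).re * (G t).re + (G t).im * (G t).im)
      ((φ b).re * (G 0).re + (G 0).re * (φ b).re +
        ((φ b).im * (G 0).im + (G 0).im * (φ b).im)) 0 := (hre.mul hre).add (him.mul him)
  have hmax : IsLocalMax (fun t => (G t).re * (G t).re + (G t).im * (G t).im) 0 := by
    refine Filter.Eventually.of_forall fun t => ?_
    have hb : ‖G t‖ ≤ 1 := h t
    have h4 : (G t).re * (G t).re + (G t).im * (G t).im = ‖G t‖ ^ 2 := by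
      rw [← Complex.normSq_apply, ← Complex.sq_norm]
    have h5 : ‖G t‖ ^ 2 ≤ 1 := by nlinarith [norm_nonneg (G t)]
    show (G t).re * (G t).re + (G t).im * (G t).im ≤ (G 0).re * (G 0).re + (G 0).im * (G 0).im
    rw [h4, hG0]
    simpa using h5
  have hzero := hmax.hasDerivAt_eq_zero hf'
  rw [hG0] at hzero
  simp at hzero
  linarith

/-- A unital contractive functional is real on selfadjoint elements of a C*-algebra. -/
lemma aux_im_eq_zero {B : Type*} [NormedRing B] [StarRing B] [CStarRing B] [CompleteSpace B]
    [NormedAlgebra ℂ B] [StarModule ℂ B] [Nontrivial B]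
    (φ : B →L[ℂ] ℂ) (hφn : ‖φ‖ ≤ 1) (hφ1 : φ 1 = 1) {c : B} (hc : IsSelfAdjoint c) :
    (φ c).im = 0 := by
  have key : (φ (I • c)).re = 0 := by
    refine aux_re_eq_zero φ hφ1 (I • c) fun t => ?_
    have hmem : ((t : ℂ) • (I • c)) ∈ skewAdjoint B := by
      rw [smul_smul]
      refine hc.smul_mem_skewAdjoint ?_
      rw [skewAdjoint.mem_iff]
      simp [Complex.ext_iff]
    let +nondep : NormedAlgebra ℚ B := .restrictScalars ℚ ℂ B
    have hu := exp_mem_unitary_of_mem_skewAdjoint hmem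
    calc ‖φ (NormedSpace.exp ((t : ℂ) • (I • c)))‖ ≤ ‖φ‖ * ‖NormedSpace.exp ((t : ℂ) • (I • c))‖ :=
          φ.le_opNorm _
      _ ≤ 1 * 1 := by
          refine mul_le_mul hφn ?_ (norm_nonneg _) zero_le_one
          rw [CStarRing.norm_of_mem_unitary hu]
      _ = 1 := one_mul 1
  rw [map_smul, smul_eq_mul, Complex.mul_re, Complex.I_re, Complex.I_im] at key
  linarith

/-- A selfadjoint element killed by all unital contractive functionals is zero. -/
lemma aux_selfAdjoint_eq_zero {B : Type*} [NormedRing B] [StarRing B] [CStarRing B]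
    [CompleteSpace B] [NormedAlgebra ℂ B] [StarModule ℂ B] [Nontrivial B] {y : B}
    (hy : IsSelfAdjoint y)
    (h : ∀ φ : B →L[ℂ] ℂ, ‖φ‖ ≤ 1 → φ 1 = 1 → φ y = 0) : y = 0 := by
  letI : CStarAlgebra B := { }
  haveI : IsStarNormal y := hy.isStarNormal
  obtain ⟨μ, hμ, hμr⟩ := spectrum.exists_nnnorm_eq_spectralRadius (a := y)
  obtain ⟨φ₀, hφ₀⟩ := (StarAlgebra.elemental.bijective_characterSpaceToSpectrum y).2 ⟨μ, hμ⟩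
  have hφ₀y : φ₀ ⟨y, StarAlgebra.elemental.self_mem ℂ y⟩ = μ := congrArg Subtype.val hφ₀
  let S := StarAlgebra.elemental ℂ y
  have hbound : ∀ z : S, ‖φ₀ z‖ ≤ 1 * ‖z‖ := by
    intro z
    rw [one_mul]
    exact spectrum.norm_le_norm_of_mem
      (AlgHom.apply_mem_spectrum (WeakDual.CharacterSpace.equivAlgHom φ₀) z)
  let p : Submodule ℂ B := Subalgebra.toSubmodule S.toSubalgebra
  let l : p →ₗ[ℂ] ℂ :=
    { toFun := fun x => φ₀ ⟨x.1, x.2⟩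
      map_add' := fun u v => map_add φ₀ ⟨u.1, u.2⟩ ⟨v.1, v.2⟩
      map_smul' := fun c u => map_smul φ₀ c ⟨u.1, u.2⟩ }
  let f : p →L[ℂ] ℂ := l.mkContinuous 1 fun x => hbound ⟨x.1, x.2⟩
  obtain ⟨g, hg, hgnorm⟩ := exists_extension_norm_eq p f
  have h1S : (1 : B) ∈ p := one_mem S
  have hyS : y ∈ p := StarAlgebra.elemental.self_mem ℂ y
  have hone : φ₀ (⟨1, h1S⟩ : S) = 1 := map_one φ₀
  have hg1 : g 1 = 1 := by
    have := hg ⟨1, h1S⟩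
    simpa [f, l, hone] using this
  have hyy : φ₀ (⟨y, hyS⟩ : S) = μ := hφ₀y
  have hgy : g y = μ := by
    have := hg ⟨y, hyS⟩
    simpa [f, l, hyy] using this
  have hgn : ‖g‖ ≤ 1 := by
    rw [hgnorm]
    exact LinearMap.mkContinuous_norm_le l zero_le_one _
  have hμ0 : μ = 0 := hgy ▸ h g hgn hg1
  have : (‖y‖₊ : ℝ≥0∞) = 0 := by
    rw [← hy.spectralRadius_eq_nnnorm, ← hμr, hμ0]
    simp
  simpa using this

section decomp

variable {R : Type*} [Ring R] [Module ℂ R] [StarAddMonoid R] [StarModule ℂ R] (b : R)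

lemma aux_sa1 : IsSelfAdjoint ((2⁻¹ : ℂ) • (b + star b)) := by
  rw [IsSelfAdjoint, star_smul, star_add, star_star]
  have h : star (2⁻¹ : ℂ) = 2⁻¹ := by simp
  rw [h, add_comm]

lemma aux_sa2 : IsSelfAdjoint (((2⁻¹ : ℂ) * Complex.I) • (star b - b)) := by
  rw [IsSelfAdjoint, star_smul, star_sub, star_star]
  have h : star ((2⁻¹ : ℂ) * Complex.I) = -((2⁻¹ : ℂ) * Complex.I) := by
    simp [Complex.ext_iff]
  rw [h, neg_smul, ← smul_neg, neg_sub]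

omit [StarModule ℂ R] in
lemma aux_decomp :
    b = (2⁻¹ : ℂ) • (b + star b) + Complex.I • (((2⁻¹ : ℂ) * Complex.I) • (star b - b)) := by
  rw [smul_smul]
  have h : Complex.I * ((2⁻¹ : ℂ) * Complex.I) = -2⁻¹ := by
    rw [mul_comm, mul_assoc, Complex.I_mul_I]; ring
  rw [h]
  module

end decomp

/-- Every unital contractive algebra homomorphism between unital C*-algebras is a
*-homomorphism. -/
theorem stmt_10 (A B : Type*)
    [NormedRing A] [StarRing A] [CStarRing A] [CompleteSpace A] [NormedAlgebra ℂ A]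
    [StarModule ℂ A]
    [NormedRing B] [StarRing B] [CStarRing B] [CompleteSpace B] [NormedAlgebra ℂ B]
    [StarModule ℂ B]
    (π : A →ₐ[ℂ] B) (hπ : ∀ a, ‖π a‖ ≤ ‖a‖) (a : A) :
    π (star a) = star (π a) := by
  obtain hB | hB := subsingleton_or_nontrivial B
  · exact Subsingleton.elim _ _
  have hA : Nontrivial A := by
    refine ⟨1, 0, fun h01 => ?_⟩
    have h0 : (1 : B) = 0 := by rw [← map_one π, h01, map_zero]
    exact one_ne_zero h0
  have hcont : Continuous π :=
    AddMonoidHomClass.continuous_of_bound π 1 fun a => by simpa using hπ a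
  have key : ∀ c : A, IsSelfAdjoint c → IsSelfAdjoint (π c) := by
    intro c hc
    set x : B := (2⁻¹ : ℂ) • (π c + star (π c)) with hxdef
    set y : B := ((2⁻¹ : ℂ) * I) • (star (π c) - π c) with hydef
    have hxs : IsSelfAdjoint x := aux_sa1 (π c)
    have hys : IsSelfAdjoint y := aux_sa2 (π c)
    have hb : π c = x + I • y := aux_decomp (π c)
    have hy0 : y = 0 := by
      refine aux_selfAdjoint_eq_zero hys fun φ hφn hφ1 => ?_
      have h1 : (φ (π c)).im = 0 := by
        have hre : (φ (I • π c)).re = 0 := by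
          refine aux_re_eq_zero φ hφ1 _ fun t => ?_
          have hmem : ((t : ℂ) • (I • c)) ∈ skewAdjoint A := by
            rw [smul_smul]
            refine hc.smul_mem_skewAdjoint ?_
            rw [skewAdjoint.mem_iff]
            simp [Complex.ext_iff]
          let +nondep : NormedAlgebra ℚ A := .restrictScalars ℚ ℂ A
          let +nondep : NormedAlgebra ℚ B := .restrictScalars ℚ ℂ B
          have hu := exp_mem_unitary_of_mem_skewAdjoint hmem
          have heq : NormedSpace.exp ((t : ℂ) • (I • π c)) = π (NormedSpace.exp ((t : ℂ) • (I • c))) := by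
            rw [map_exp π hcont]
            congr 1
            rw [map_smul, map_smul]
          rw [heq]
          calc ‖φ (π (NormedSpace.exp ((t : ℂ) • (I • c))))‖
              ≤ ‖φ‖ * ‖π (NormedSpace.exp ((t : ℂ) • (I • c)))‖ := φ.le_opNorm _
            _ ≤ 1 * ‖NormedSpace.exp ((t : ℂ) • (I • c))‖ :=
                mul_le_mul hφn (hπ _) (norm_nonneg _) zero_le_one
            _ = 1 := by rw [CStarRing.norm_of_mem_unitary hu, mul_one]
        rw [map_smul, smul_eq_mul, Complex.mul_re, Complex.I_re, Complex.I_im] at hre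
        linarith
      have h2 : (φ x).im = 0 := aux_im_eq_zero φ hφn hφ1 hxs
      have h3 : (φ y).im = 0 := aux_im_eq_zero φ hφn hφ1 hys
      have h4 : φ (π c) = φ x + I * φ y := by rw [hb]; simp [smul_eq_mul]
      have h5 : (φ y).re = 0 := by
        have h6 := congrArg Complex.im h4
        rw [h1, Complex.add_im, h2, Complex.mul_im, Complex.I_re, Complex.I_im, h3] at h6
        linarith
      exact Complex.ext h5 h3
    rw [hb, hy0, smul_zero, add_zero]
    exact hxs
  have h₁ : IsSelfAdjoint ((2⁻¹ : ℂ) • (a + star a)) := aux_sa1 a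
  have h₂ : IsSelfAdjoint (((2⁻¹ : ℂ) * I) • (star a - a)) := aux_sa2 a
  set c₁ : A := (2⁻¹ : ℂ) • (a + star a)
  set c₂ : A := ((2⁻¹ : ℂ) * I) • (star a - a)
  have ha : a = c₁ + I • c₂ := aux_decomp a
  have hsa : star a = c₁ - I • c₂ := by
    rw [ha, star_add, h₁.star_eq, star_smul, h₂.star_eq, Complex.star_def, Complex.conj_I,
      neg_smul, ← sub_eq_add_neg]
  rw [hsa, ha]
  calc π (c₁ - I • c₂) = π c₁ - I • π c₂ := by simp
    _ = star (π c₁ + I • π c₂) := by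
        rw [star_add, (key c₁ h₁).star_eq, star_smul, (key c₂ h₂).star_eq, Complex.star_def,
          Complex.conj_I, neg_smul, ← sub_eq_add_neg]
    _ = star (π (c₁ + I • c₂)) := by simp
end
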